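/- Let d_{kl} ≥ 0 for k ≠ l be variables, ν > 0, t_{kl} = (1 + d_{kl}²/ν)^{−(ν+1)/2}, Z = Σ_{k≠l} t_{kl}, and q_{ij} = t_{ij}/Z. Given constants p_{kl} ≥ 0 with Σ_{k≠l} p_{kl} = 1, the partial derivative of L = −Σ_{k≠l} p_{kl} ln q_{kl} with respect to d_{ij} equals ((ν+1)/ν)·(p_{ij} − q_{ij})·d_{ij}·(1 + d_{ij}²/ν)^{−1}. -/

import Mathlib

/-!
Since the weights `p` sum to one, `L = log Z - ∑ p_k log t_k`, so moving `t_ij` alone changes `L`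
at rate `1 / Z - p_ij / t_ij`. The Student kernel has logarithmic derivative
`t'/t = -((ν + 1) / ν) d (1 + d² / ν)⁻¹`, and the chain rule gives the gradient.
-/

open Finset Function

namespace TSNE

variable {ι : Type*} [Fintype ι]

noncomputable def crossEntropy (p w : ι → ℝ) : ℝ :=
  -∑ k, p k * Real.log (w k / ∑ l, w l)

theorem crossEntropy_eq_of_pos (p : ι → ℝ) {w : ι → ℝ} (hw : ∀ k, 0 < w k) :
    crossEntropy p w = (∑ k, p k) * Real.log (∑ l, w l) - ∑ k, p k * Real.log (w k) := by
  have hZ (k : ι) : (∑ l, w l) ≠ 0 :=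
    ((hw k).trans_le (single_le_sum (fun l _ => (hw l).le) (mem_univ k))).ne'
  have hterm (k : ι) : p k * Real.log (w k / ∑ l, w l)
      = p k * Real.log (w k) - p k * Real.log (∑ l, w l) := by
    rw [Real.log_div (hw k).ne' (hZ k)]
    ring
  simp only [crossEntropy, hterm, sum_sub_distrib, ← sum_mul]
  ring

variable [DecidableEq ι]

theorem hasDerivAt_crossEntropy_update (p : ι → ℝ) {w : ι → ℝ} (hw : ∀ k, 0 < w k) (i : ι) :
    HasDerivAt (fun u => crossEntropy p (update w i u))
      ((∑ k, p k) / (∑ l, w l) - p i / w i) (w i) := by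
  set C := ∑ l ∈ univ \ {i}, w l
  set D := ∑ k ∈ univ \ {i}, p k * Real.log (w k)
  have hC : 0 ≤ C := sum_nonneg fun l _ => (hw l).le
  have hsum_update (u : ℝ) : ∑ l, update w i u l = u + C := sum_update_of_mem (mem_univ i) w u
  have hZ : ∑ l, w l = w i + C := by rw [← hsum_update, update_eq_self]
  have hlocal : (fun u => crossEntropy p (update w i u)) =ᶠ[nhds (w i)]
      fun u => (∑ k, p k) * Real.log (u + C) - (p i * Real.log u + D) := by
    filter_upwards [lt_mem_nhds (hw i)] with u hu
    have hpos (k : ι) : 0 < update w i u k := by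
      rcases eq_or_ne k i with rfl | hk
      · simpa using hu
      · simpa [hk] using hw k
    rw [crossEntropy_eq_of_pos p hpos, hsum_update]
    simp only [apply_update (fun k x => p k * Real.log x), sum_update_of_mem (mem_univ i)]
    rfl
  have hderiv : HasDerivAt (fun u => (∑ k, p k) * Real.log (u + C) - (p i * Real.log u + D))
      ((∑ k, p k) / (w i + C) - p i / w i) (w i) := by
    have hZi : w i + C ≠ 0 := (add_pos_of_pos_of_nonneg (hw i) hC).ne'
    refine ((((hasDerivAt_id' (w i)).add_const C).log hZi).const_mul (∑ k, p k)).sub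
      (((Real.hasDerivAt_log (hw i).ne').const_mul (p i)).add_const D) |>.congr_deriv ?_
    field_simp
  rw [hZ]
  exact hderiv.congr_of_eventuallyEq hlocal

theorem hasDerivAt_rpow_one_add_sq_div (a : ℝ) {ν : ℝ} (hν : 0 < ν) (x : ℝ) :
    HasDerivAt (fun s => (1 + s ^ 2 / ν) ^ a)
      (2 * a / ν * x * (1 + x ^ 2 / ν)⁻¹ * (1 + x ^ 2 / ν) ^ a) x := by
  have hg : 0 < 1 + x ^ 2 / ν := by positivity
  have hbase : HasDerivAt (fun s => 1 + s ^ 2 / ν) (2 * x / ν) x := by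
    simpa using ((hasDerivAt_pow 2 x).div_const ν).const_add 1
  refine (hbase.rpow_const (Or.inl hg.ne')).congr_deriv ?_
  rw [Real.rpow_sub_one hg.ne']
  field_simp

end TSNE

theorem tsne_gradient_corrected_general {ι : Type*} [Fintype ι] [DecidableEq ι]
    (d p : ι → ℝ) (ν : ℝ) (hν : 0 < ν)
    (hsum : ∑ k, p k = 1) (i0 : ι) :
    HasDerivAt
      (fun s : ℝ =>
        -∑ k, p k * Real.log
          ((1 + (Function.update d i0 s k) ^ 2 / ν) ^ (-(ν + 1) / 2) /
            ∑ l, (1 + (Function.update d i0 s l) ^ 2 / ν) ^ (-(ν + 1) / 2)))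
      (((ν + 1) / ν) *
        (p i0 -
          (1 + (d i0) ^ 2 / ν) ^ (-(ν + 1) / 2) /
            ∑ l, (1 + (d l) ^ 2 / ν) ^ (-(ν + 1) / 2)) *
        (d i0) * (1 + (d i0) ^ 2 / ν)⁻¹)
      (d i0) := by
  set K : ℝ → ℝ := fun s => (1 + s ^ 2 / ν) ^ (-(ν + 1) / 2)
  have hK_pos (s : ℝ) : 0 < K s := by positivity
  have hfun : (fun s : ℝ =>
        -∑ k, p k * Real.log (K (update d i0 s k) / ∑ l, K (update d i0 s l)))
      = fun s => TSNE.crossEntropy p (update (K ∘ d) i0 (K s)) := by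
    funext s
    simp only [TSNE.crossEntropy, ← comp_update, comp_apply]
  have hchain := (TSNE.hasDerivAt_crossEntropy_update p (w := K ∘ d) (fun k => hK_pos (d k)) i0).comp
    (d i0) (TSNE.hasDerivAt_rpow_one_add_sq_div (-(ν + 1) / 2) hν (d i0))
  rw [hfun]
  refine hchain.congr_deriv ?_
  have hKd : (1 + d i0 ^ 2 / ν) ^ (-(ν + 1) / 2) = K (d i0) := rfl
  have hZ : ∑ l, (1 + d l ^ 2 / ν) ^ (-(ν + 1) / 2) = ∑ l, K (d l) := rfl
  have hKd_ne : K (d i0) ≠ 0 := (hK_pos (d i0)).ne'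
  simp only [comp_apply, hsum, hKd, hZ]
  field_simp
  ring

theorem tsne_gradient_corrected {ι : Type*} [Fintype ι] [DecidableEq ι]
    (d p : ι → ℝ) (ν : ℝ) (hν : 0 < ν) (hd : ∀ k, 0 ≤ d k)
    (hp : ∀ k, 0 ≤ p k) (hsum : ∑ k, p k = 1) (i0 : ι) :
    HasDerivAt
      (fun s : ℝ =>
        -∑ k, p k * Real.log
          ((1 + (Function.update d i0 s k) ^ 2 / ν) ^ (-(ν + 1) / 2) /
            ∑ l, (1 + (Function.update d i0 s l) ^ 2 / ν) ^ (-(ν + 1) / 2)))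
      (((ν + 1) / ν) *
        (p i0 -
          (1 + (d i0) ^ 2 / ν) ^ (-(ν + 1) / 2) /
            ∑ l, (1 + (d l) ^ 2 / ν) ^ (-(ν + 1) / 2)) *
        (d i0) * (1 + (d i0) ^ 2 / ν)⁻¹)
      (d i0) :=
  tsne_gradient_corrected_general d p ν hν hsum i0
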